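/- Let a < b < c be positive integers with a + b ≤ c, and let y = (c, b, a). Then the set of nondecreasing invariant parking assortments for y is PA^{inv,↑}_3(y) = {(1,1,1), (1,1,1+a), (1,1,1+b), (1,1,1+a+b)}. -/

import Mathlib

open Classical in
/-- One car attempts to park on a one-way street with spots `1, …, m`: given the set
`occ` of occupied spots, the car with preference `p` and length `l` parks in spots
`j, j+1, …, j+l-1` for the least `j ≥ p` such that these spots all exist (are `≤ m`)
and are unoccupied; returns the new set of occupied spots, or `none` if parking fails. -/
noncomputable def parkOne (m : ℕ) (occ : Finset ℕ) (p l : ℕ) : Option (Finset ℕ) :=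
  if h : ∃ j, p ≤ j ∧ j + l ≤ m + 1 ∧ ∀ k ∈ Finset.Ico j (j + l), k ∉ occ then
    some (occ ∪ Finset.Ico (Nat.find h) (Nat.find h + l))
  else none

/-- Run the parking-assortment process for the cars `(preference, length)` in order. -/
noncomputable def parkList (m : ℕ) : List (ℕ × ℕ) → Finset ℕ → Option (Finset ℕ)
  | [], occ => some occ
  | c :: rest, occ => (parkOne m occ c.1 c.2).bind (parkList m rest)

/-- `x` is a parking assortment for the list of car lengths `y`. -/
def IsPA (y x : List ℕ) : Prop :=
  x.length = y.length ∧ (∀ a ∈ x, 1 ≤ a ∧ a ≤ y.sum) ∧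
    (parkList y.sum (x.zip y) ∅).isSome

/-- `PA y` is the set of parking assortments for `y`. -/
def PA (y : List ℕ) : Set (List ℕ) := {x | IsPA y x}

/-- `PAinv y` is the set of (permutation-)invariant parking assortments for `y`:
those preference lists all of whose rearrangements are parking assortments for `y`. -/
def PAinv (y : List ℕ) : Set (List ℕ) := {x | ∀ x', x'.Perm x → IsPA y x'}

/-- `y` is minimally invariant if the all-ones list is the only invariant
parking assortment for `y`. -/
def MinInv (y : List ℕ) : Prop := PAinv y = {List.replicate y.length 1}

/-! For three cars the greedy process can be unfolded by hand: the first car occupies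
`[p₁, p₁ + l₁)`, the second lands either before it or at the first free spot after it, and the
third parks iff one of the three remaining gaps is long enough. Being a parking assortment is
thus a linear condition with `max`, and invariance of a sorted list is the conjunction of this
condition over its six rearrangements, a system that `omega` solves. -/

lemma Finset.Ico_disjoint_Ico {α : Type*} [LinearOrder α] [LocallyFiniteOrder α]
    {a₁ a₂ b₁ b₂ : α} :
    Disjoint (Finset.Ico a₁ a₂) (Finset.Ico b₁ b₂) ↔ min a₂ b₂ ≤ max a₁ b₁ := by
  rw [← Finset.disjoint_coe, Finset.coe_Ico, Finset.coe_Ico, Set.Ico_disjoint_Ico]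

open Finset

section parkOne

variable {m p l : ℕ} {occ : Finset ℕ}

lemma parkOne_isSome_iff :
    (parkOne m occ p l).isSome ↔
      ∃ j, p ≤ j ∧ j + l ≤ m + 1 ∧ Disjoint (Ico j (j + l)) occ := by
  simp only [disjoint_left]
  unfold parkOne
  split_ifs with h
  exacts [iff_of_true rfl h, iff_of_false (by simp) h]

lemma parkOne_eq_some {j : ℕ}
    (hj : IsLeast {j | p ≤ j ∧ j + l ≤ m + 1 ∧ Disjoint (Ico j (j + l)) occ} j) :
    parkOne m occ p l = some (occ ∪ Ico j (j + l)) := by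
  simp only [disjoint_left] at hj
  have hex : ∃ j, p ≤ j ∧ j + l ≤ m + 1 ∧ ∀ k ∈ Ico j (j + l), k ∉ occ := ⟨j, hj.1⟩
  rw [parkOne, dif_pos hex,
    (Nat.find_eq_iff hex).mpr ⟨hj.1, fun n hn hc => (hj.2 hc).not_gt hn⟩]

lemma parkOne_eq_none (h : ¬∃ j, p ≤ j ∧ j + l ≤ m + 1 ∧ Disjoint (Ico j (j + l)) occ) :
    parkOne m occ p l = none :=
  Option.not_isSome_iff_eq_none.mp (parkOne_isSome_iff.not.mpr h)

lemma parkOne_empty :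
    parkOne m ∅ p l = if p + l ≤ m + 1 then some (Ico p (p + l)) else none := by
  split_ifs with h
  · simpa using parkOne_eq_some (occ := ∅) ⟨⟨le_rfl, h, by simp⟩, fun _ hj => hj.1⟩
  · exact parkOne_eq_none fun ⟨j, hpj, hjm, _⟩ => h (by omega)

lemma parkOne_Ico {s e : ℕ} (hl : 0 < l) (hse : s < e) (he : e ≤ m + 1) :
    parkOne m (Ico s e) p l =
      if p + l ≤ s then some (Ico s e ∪ Ico p (p + l))
      else if max p e + l ≤ m + 1 then some (Ico s e ∪ Ico (max p e) (max p e + l))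
      else none := by
  split_ifs with hbefore hafter
  · refine parkOne_eq_some ⟨⟨le_rfl, by omega, ?_⟩, fun _ hj => hj.1⟩
    rw [Ico_disjoint_Ico]; omega
  · refine parkOne_eq_some ⟨⟨le_max_left _ _, hafter, ?_⟩, fun j ⟨hpj, _, hfree⟩ => ?_⟩
    all_goals rw [Ico_disjoint_Ico] at *; omega
  · refine parkOne_eq_none fun ⟨j, hpj, hjm, hfree⟩ => ?_
    rw [Ico_disjoint_Ico] at hfree; omega

lemma parkOne_Ico_union_Ico_isSome_iff {s₁ e₁ s₂ e₂ : ℕ} (hl : 0 < l) (h₁ : s₁ < e₁)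
    (h₁₂ : e₁ ≤ s₂) (h₂ : s₂ < e₂) (he : e₂ ≤ m + 1) :
    (parkOne m (Ico s₁ e₁ ∪ Ico s₂ e₂) p l).isSome ↔
      p + l ≤ s₁ ∨ max p e₁ + l ≤ s₂ ∨ max p e₂ + l ≤ m + 1 := by
  simp only [parkOne_isSome_iff, disjoint_union_right, Ico_disjoint_Ico]
  constructor
  · rintro ⟨j, hpj, hjm, hj₁, hj₂⟩
    omega
  · rintro (h | h | h)
    · exact ⟨p, by omega⟩
    · exact ⟨max p e₁, by omega⟩
    · exact ⟨max p e₂, by omega⟩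

end parkOne

/-- The first car parks at `p₁`; the second at `p₂` if it fits before the first car, otherwise
at `max p₂ (p₁ + l₁)`; the third car then needs one of the three gaps left by the first two. -/
def ParksThree (m l₁ l₂ l₃ p₁ p₂ p₃ : ℕ) : Prop :=
  p₁ + l₁ ≤ m + 1 ∧
    ((p₂ + l₂ ≤ p₁ ∧
        (p₃ + l₃ ≤ p₂ ∨ max p₃ (p₂ + l₂) + l₃ ≤ p₁ ∨ max p₃ (p₁ + l₁) + l₃ ≤ m + 1)) ∨
      (p₁ < p₂ + l₂ ∧ max p₂ (p₁ + l₁) + l₂ ≤ m + 1 ∧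
        (p₃ + l₃ ≤ p₁ ∨ max p₃ (p₁ + l₁) + l₃ ≤ max p₂ (p₁ + l₁) ∨
          max p₃ (max p₂ (p₁ + l₁) + l₂) + l₃ ≤ m + 1)))

lemma parkList_three_isSome_iff {m l₁ l₂ l₃ p₁ p₂ p₃ : ℕ}
    (h₁ : 0 < l₁) (h₂ : 0 < l₂) (h₃ : 0 < l₃) :
    (parkList m [(p₁, l₁), (p₂, l₂), (p₃, l₃)] ∅).isSome ↔ ParksThree m l₁ l₂ l₃ p₁ p₂ p₃ := by
  simp only [parkList, parkOne_empty]
  split_ifs with hfit₁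
  swap
  · simp only [ParksThree, Option.bind_none, Option.isSome_none, Bool.false_eq_true, false_iff]
    omega
  simp only [Option.bind_some, parkOne_Ico h₂ (by omega : p₁ < p₁ + l₁) hfit₁]
  split_ifs with hbefore hafter
  · rw [Option.bind_some, Option.bind_fun_some, union_comm,
      parkOne_Ico_union_Ico_isSome_iff h₃ (by omega) hbefore (by omega) hfit₁]
    simp only [ParksThree]
    omega
  · rw [Option.bind_some, Option.bind_fun_some,
      parkOne_Ico_union_Ico_isSome_iff h₃ (by omega) (le_max_right _ _) (by omega) hafter]
    simp only [ParksThree]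
    omega
  · simp only [ParksThree, Option.bind_none, Option.isSome_none, Bool.false_eq_true, false_iff]
    omega

lemma isPA_three_iff {l₁ l₂ l₃ q₁ q₂ q₃ : ℕ} (h₁ : 0 < l₁) (h₂ : 0 < l₂) (h₃ : 0 < l₃) :
    IsPA [l₁, l₂, l₃] [q₁, q₂, q₃] ↔
      ((1 ≤ q₁ ∧ q₁ ≤ l₁ + l₂ + l₃) ∧ (1 ≤ q₂ ∧ q₂ ≤ l₁ + l₂ + l₃) ∧
        (1 ≤ q₃ ∧ q₃ ≤ l₁ + l₂ + l₃)) ∧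
        ParksThree (l₁ + l₂ + l₃) l₁ l₂ l₃ q₁ q₂ q₃ := by
  rw [IsPA, List.sum_cons, List.sum_cons, List.sum_cons, List.sum_nil, add_zero, ← add_assoc]
  simp only [List.zip_cons_cons, List.zip_nil_left, parkList_three_isSome_iff h₁ h₂ h₃]
  simp

lemma List.forall_perm_three_iff {α : Type*} {P : List α → Prop} {u v t : α} :
    (∀ x, x.Perm [u, v, t] → P x) ↔
      P [u, v, t] ∧ P [u, t, v] ∧ P [v, u, t] ∧ P [v, t, u] ∧ P [t, u, v] ∧ P [t, v, u] := by
  simp only [← mem_permutations, permutations, permutationsAux, permutationsAux.rec, foldr_cons,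
    foldr_nil, permutationsAux2_snd_nil, permutationsAux2_snd_cons, append_nil, id_eq,
    cons_append, nil_append, mem_cons, not_mem_nil, or_false, forall_eq_or_imp, forall_eq]
  tauto

theorem stmt19_general (a b c : ℕ) (ha : 0 < a) (hab : a < b)
    (habc : a + b ≤ c) :
    {x | x ∈ PAinv [c, b, a] ∧ x.Pairwise (· ≤ ·)} =
      ({[1, 1, 1], [1, 1, 1 + a], [1, 1, 1 + b], [1, 1, 1 + a + b]} : Set (List ℕ)) := by
  have hb : 0 < b := by omega
  have hc : 0 < c := by omega
  ext x
  simp only [Set.mem_ofPred_eq, Set.mem_insert_iff, Set.mem_singleton_iff]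
  constructor
  · rintro ⟨hinv, hsort⟩
    obtain ⟨u, v, t, rfl⟩ := List.length_eq_three.mp (hinv x (.refl x)).1
    simp only [PAinv, Set.mem_ofPred_eq, List.forall_perm_three_iff, isPA_three_iff hc hb ha,
      ParksThree] at hinv
    simp only [List.pairwise_cons, List.forall_mem_cons, List.not_mem_nil, IsEmpty.forall_iff,
      implies_true] at hsort
    simp only [List.cons.injEq, and_true]
    omega
  · rintro (rfl | rfl | rfl | rfl) <;>
      simp only [PAinv, Set.mem_ofPred_eq, List.forall_perm_three_iff, isPA_three_iff hc hb ha,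
        ParksThree, List.pairwise_cons, List.forall_mem_cons, List.not_mem_nil,
        IsEmpty.forall_iff, implies_true, List.Pairwise.nil, and_true] <;>
      omega

theorem stmt19 (a b c : ℕ) (ha : 0 < a) (hab : a < b) (hbc : b < c)
    (habc : a + b ≤ c) :
    {x | x ∈ PAinv [c, b, a] ∧ x.Pairwise (· ≤ ·)} =
      ({[1, 1, 1], [1, 1, 1 + a], [1, 1, 1 + b], [1, 1, 1 + a + b]} : Set (List ℕ)) :=
  stmt19_general a b c ha hab habc
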